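/- Let G = (V,E) be a strongly connected directed graph on M vertices, let T > 0, and let γ : [0,T] → ℝ^M be a continuously differentiable curve taking values in int P(V). Then the system is path controllable along γ: there exist functions u_e : [0,T] → [0,∞), one for each e ∈ E, such that γ'(t) = Σ_{e∈E} u_e(t) B_e γ(t) for all t ∈ [0,T]. -/

import Mathlib

open Matrix

noncomputable section

/-- The (relative) interior of the probability simplex: strictly positive densities. -/
def probSimplexInterior (M : ℕ) : Set (Fin M → ℝ) :=
  {x | (∀ i, 0 < x i) ∧ ∑ i, x i = 1}

/-- The control matrix `B_e` for an edge `e = (i, j)`: entry `(i,i)` is `-1`, entry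
`(j,i)` is `1`, all other entries vanish. -/
def Bmat (M : ℕ) (e : Fin M × Fin M) : Matrix (Fin M) (Fin M) ℝ :=
  fun i j =>
    (if i = e.1 ∧ j = e.1 then (-1 : ℝ) else 0) + (if i = e.2 ∧ j = e.1 then 1 else 0)

/-!
Since `γ` stays in the simplex, `γ' t` has coordinate sum zero. The edge vectors
`e_j - e_i`, `(i, j) ∈ E`, span a cone that contains `e_l - e_k` for all `k, l` (follow a
path from `k` to `l`), so by strong connectivity it contains both signs of these vectors and
hence the whole sum-zero hyperplane. As `B_e x = x_i (e_j - e_i)` and `γ t` is positive,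
dividing the cone coefficients of `γ' t` by `γ t i` gives nonnegative controls.
-/

lemma sum_eq_zero_of_hasDerivWithinAt {ι : Type*} [Fintype ι] {γ : ℝ → ι → ℝ} {γ' : ι → ℝ}
    {s : Set ℝ} {t a : ℝ}
    (hγ : HasDerivWithinAt γ γ' s t) (hs : UniqueDiffWithinAt ℝ s t) (ht : t ∈ s)
    (hsum : ∀ x ∈ s, ∑ i, γ x i = a) : ∑ i, γ' i = 0 := by
  have hderiv_sum : HasDerivWithinAt (fun x => ∑ i, γ x i) (∑ i, γ' i) s t :=
    HasDerivWithinAt.fun_sum fun i _ => hasDerivWithinAt_pi.1 hγ i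
  exact hs.eq_deriv _ hderiv_sum ((hasDerivWithinAt_const t s a).congr hsum (hsum t ht))

variable {ι : Type*} [DecidableEq ι]

def edgeVec (e : ι × ι) : ι → ℝ :=
  Pi.single e.2 1 - Pi.single e.1 1

lemma Bmat_mulVec (M : ℕ) (e : Fin M × Fin M) (x : Fin M → ℝ) :
    Bmat M e *ᵥ x = x e.1 • edgeVec e := by
  ext i
  simp only [Bmat, mulVec, dotProduct, edgeVec, add_mul, ite_mul, ite_and, neg_one_mul,
    one_mul, zero_mul, Finset.sum_add_distrib, Finset.sum_ite_irrel, Finset.sum_ite_eq',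
    Finset.mem_univ, if_true, Finset.sum_const_zero, Pi.smul_apply, Pi.sub_apply,
    Pi.single_apply, smul_eq_mul]
  split_ifs <;> ring

abbrev edgeCone (E : Finset (ι × ι)) : PointedCone ℝ (ι → ℝ) :=
  PointedCone.hull ℝ (edgeVec '' E)

lemma single_sub_single_mem_edgeCone {E : Finset (ι × ι)} {k l : ι}
    (h : Relation.ReflTransGen (fun a b => (a, b) ∈ E) k l) :
    Pi.single l 1 - Pi.single k 1 ∈ edgeCone E := by
  induction h with
  | refl => simp
  | @tail j l _ hjl ih =>
    have hedge : edgeVec (j, l) ∈ edgeCone E := PointedCone.subset_hull ⟨(j, l), hjl, rfl⟩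
    simpa [edgeVec] using add_mem ih hedge

lemma eq_sum_smul_single_sub_single [Fintype ι] {v : ι → ℝ} (hv : ∑ i, v i = 0) (i₀ : ι) :
    v = ∑ k, v k • (Pi.single k 1 - Pi.single i₀ 1) := by
  ext i
  simp [Finset.sum_apply, Pi.single_apply, mul_sub, Finset.sum_sub_distrib, hv]

lemma mem_edgeCone_of_sum_eq_zero [Fintype ι] {E : Finset (ι × ι)}
    (hconn : ∀ i j, Relation.ReflTransGen (fun a b => (a, b) ∈ E) i j)
    {v : ι → ℝ} (hv : ∑ i, v i = 0) : v ∈ edgeCone E := by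
  cases isEmpty_or_nonempty ι with
  | inl _ => exact Subsingleton.elim 0 v ▸ zero_mem _
  | inr h =>
    obtain ⟨i₀⟩ := h
    have hlineal : ∀ k, Pi.single k 1 - Pi.single i₀ 1 ∈ (edgeCone E).lineal := fun k =>
      PointedCone.mem_lineal.2 ⟨single_sub_single_mem_edgeCone (hconn i₀ k),
        neg_sub (Pi.single k 1 : ι → ℝ) (Pi.single i₀ 1) ▸
          single_sub_single_mem_edgeCone (hconn k i₀)⟩
    rw [eq_sum_smul_single_sub_single hv i₀]
    exact (edgeCone E).lineal_le (sum_mem fun k _ => Submodule.smul_mem _ _ (hlineal k))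

lemma exists_nonneg_coeffs_of_mem_edgeCone {E : Finset (ι × ι)} {v : ι → ℝ}
    (hv : v ∈ edgeCone E) :
    ∃ c : ι × ι → ℝ, (∀ e, 0 ≤ c e) ∧ v = ∑ e ∈ E, c e • edgeVec e := by
  obtain ⟨c, rfl⟩ := (Submodule.mem_span_image_finset_iff_exists_fun' _).1 hv
  exact ⟨fun e => c e, fun e => (c e).2, rfl⟩

theorem path_controllability_general
    (M : ℕ) (E : Finset (Fin M × Fin M))
    (hconn : ∀ i j : Fin M, Relation.ReflTransGen (fun a b => (a, b) ∈ E) i j)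
    (T : ℝ) (hT : 0 < T)
    (γ γ' : ℝ → Fin M → ℝ)
    (hderiv : ∀ t ∈ Set.Icc (0 : ℝ) T, HasDerivWithinAt γ (γ' t) (Set.Icc 0 T) t)
    (hval : ∀ t ∈ Set.Icc (0 : ℝ) T, γ t ∈ probSimplexInterior M) :
    ∃ u : Fin M × Fin M → ℝ → ℝ,
      (∀ e ∈ E, ∀ t ∈ Set.Icc (0 : ℝ) T, 0 ≤ u e t) ∧
      ∀ t ∈ Set.Icc (0 : ℝ) T,
        γ' t = ∑ e ∈ E, u e t • (Bmat M e).mulVec (γ t) := by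
  have hcoeffs : ∀ t ∈ Set.Icc (0 : ℝ) T, ∃ c : Fin M × Fin M → ℝ,
      (∀ e, 0 ≤ c e) ∧ γ' t = ∑ e ∈ E, c e • edgeVec e := fun t ht =>
    exists_nonneg_coeffs_of_mem_edgeCone <| mem_edgeCone_of_sum_eq_zero hconn <|
      sum_eq_zero_of_hasDerivWithinAt (hderiv t ht) (uniqueDiffOn_Icc hT t ht) ht
        fun s hs => (hval s hs).2
  choose! c hc_nonneg hc using hcoeffs
  refine ⟨fun e t => c t e / γ t e.1,
    fun e _ t ht => div_nonneg (hc_nonneg t ht e) ((hval t ht).1 e.1).le, fun t ht => ?_⟩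
  rw [hc t ht]
  refine Finset.sum_congr rfl fun e _ => ?_
  rw [Bmat_mulVec, smul_smul, div_mul_cancel₀ _ ((hval t ht).1 e.1).ne']

/-- for a strongly connected digraph, the system is path controllable
along any continuously differentiable curve `γ : [0,T] → int P(V)`: there exist
nonnegative controls `u_e` realizing `γ'(t) = ∑_{e ∈ E} u_e(t) B_e γ(t)`. -/
theorem path_controllability
    (M : ℕ) (hM : 1 ≤ M) (E : Finset (Fin M × Fin M))
    (hloop : ∀ i : Fin M, (i, i) ∉ E)
    (hconn : ∀ i j : Fin M, Relation.ReflTransGen (fun a b => (a, b) ∈ E) i j)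
    (T : ℝ) (hT : 0 < T)
    (γ γ' : ℝ → Fin M → ℝ)
    (hderiv : ∀ t ∈ Set.Icc (0 : ℝ) T, HasDerivWithinAt γ (γ' t) (Set.Icc 0 T) t)
    (hderivCont : ContinuousOn γ' (Set.Icc 0 T))
    (hval : ∀ t ∈ Set.Icc (0 : ℝ) T, γ t ∈ probSimplexInterior M) :
    ∃ u : Fin M × Fin M → ℝ → ℝ,
      (∀ e ∈ E, ∀ t ∈ Set.Icc (0 : ℝ) T, 0 ≤ u e t) ∧
      ∀ t ∈ Set.Icc (0 : ℝ) T,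
        γ' t = ∑ e ∈ E, u e t • (Bmat M e).mulVec (γ t) :=
  path_controllability_general M E hconn T hT γ γ' hderiv hval
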